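/- Let Q₀ be the degenerate symmetric bilinear form on ℝ^{n+2} given by Q₀(a, b) = a₁b₁ + ... + a_n b_n. Then the Lie algebra structure on Λ²ℝ^{n+2} defined by [v∧w, u∧z] := L_{v∧w}(u) ∧ z + u ∧ L_{v∧w}(z), where L_{v∧w}(u) = Q₀(v,u)w − Q₀(w,u)v, satisfies the Jacobi identity, and is isomorphic to g_n = o(n) ⋉ h_n, where h_n is the 2n+1-dimensional Heisenberg Lie algebra and o(n) acts standardly on the ℝⁿ⊕ℝⁿ part and trivially on the center. -/
import Mathlib


open Matrix

/-- The underlying space of `g_n(ε₁,ε₂,ε₃)`, in coordinates: `(A, v, w, s)`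
where `A` is the (antisymmetric) coefficient matrix of `Σ_{i<j} A i j • l_{ij}`,
`v` the coefficient vector of `Σ v i • e_i`, `w` that of `Σ w i • e_{n+i}`,
and `s` the coefficient of `I`. -/
abbrev GAmb (n : ℕ) := Matrix (Fin n) (Fin n) ℝ × (Fin n → ℝ) × (Fin n → ℝ) × ℝ

/-- The deformed bracket of `g_n(ε₁,ε₂,ε₃)`, in coordinates.  It encodes the
structure constants: standard `o(n,ℝ)` relations among the `l_{ij}`;
`[l_{ij},e_k] = δ_{ik}e_j − δ_{jk}e_i`, `[l_{ij},e_{n+k}] = δ_{ik}e_{n+j} − δ_{jk}e_{n+i}`,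
`[l_{ij},I] = 0`; `[e_i,e_j] = ε₁ l_{ij}`, `[e_{n+i},e_{n+j}] = ε₂ l_{ij}`,
`[e_i,e_{n+j}] = δ_{ij} I + ε₃ l_{ij}`, `[e_i,I] = ε₃ e_i − ε₁ e_{n+i}`,
`[e_{n+i},I] = ε₂ e_i − ε₃ e_{n+i}`. -/
noncomputable def gBr (n : ℕ) (e1 e2 e3 : ℝ) (X Y : GAmb n) : GAmb n :=
  ( Y.1 * X.1 - X.1 * Y.1
      + e1 • (Matrix.vecMulVec X.2.1 Y.2.1 - Matrix.vecMulVec Y.2.1 X.2.1)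
      + e2 • (Matrix.vecMulVec X.2.2.1 Y.2.2.1 - Matrix.vecMulVec Y.2.2.1 X.2.2.1)
      + e3 • (Matrix.vecMulVec X.2.1 Y.2.2.1 - Matrix.vecMulVec Y.2.2.1 X.2.1)
      + e3 • (Matrix.vecMulVec X.2.2.1 Y.2.1 - Matrix.vecMulVec Y.2.1 X.2.2.1),
    - X.1.mulVec Y.2.1 + Y.1.mulVec X.2.1
      + e3 • (Y.2.2.2 • X.2.1 - X.2.2.2 • Y.2.1)
      + e2 • (Y.2.2.2 • X.2.2.1 - X.2.2.2 • Y.2.2.1),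
    - X.1.mulVec Y.2.2.1 + Y.1.mulVec X.2.2.1
      - e1 • (Y.2.2.2 • X.2.1 - X.2.2.2 • Y.2.1)
      - e3 • (Y.2.2.2 • X.2.2.1 - X.2.2.2 • Y.2.2.1),
    (∑ i, X.2.1 i * Y.2.2.1 i) - (∑ i, Y.2.1 i * X.2.2.1 i) )

/-- The degenerate quadratic form `Q₀(a,b) = a₁b₁ + ⋯ + a_n b_n` on `ℝ^{n+2}`,
as a diagonal matrix. -/
noncomputable def Q0mat (n : ℕ) : Matrix (Fin (n + 2)) (Fin (n + 2)) ℝ :=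
  Matrix.diagonal (fun a => if (a : ℕ) < n then 1 else 0)

/-- The bracket on `Λ²ℝ^{n+2}` (identified with antisymmetric `(n+2) × (n+2)`
real matrices via `v∧w ↦ vwᵀ − wvᵀ`) induced by `Q₀`:
`[v∧w, u∧z] = L_{v∧w}(u) ∧ z + u ∧ L_{v∧w}(z)` with
`L_{v∧w}(u) = Q₀(v,u)w − Q₀(w,u)v`; in matrix form `[M, N] = N·D·M − M·D·N`
where `D` is the matrix of `Q₀`. -/
noncomputable def wedgeBr (n : ℕ) (M N : Matrix (Fin (n + 2)) (Fin (n + 2)) ℝ) :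
    Matrix (Fin (n + 2)) (Fin (n + 2)) ℝ :=
  N * Q0mat n * M - M * Q0mat n * N

/-- The correspondence `v_i∧v_j ↦ l_{ij}`, `v_i∧v_{n+1} ↦ e_i`,
`v_i∧v_{n+2} ↦ e_{n+i}`, `v_{n+1}∧v_{n+2} ↦ I`, reading off coordinates. -/
noncomputable def Psi (n : ℕ) (M : Matrix (Fin (n + 2)) (Fin (n + 2)) ℝ) : GAmb n :=
  (Matrix.of fun i j : Fin n => M (i.castLE (by omega)) (j.castLE (by omega)),
   fun i : Fin n => M (i.castLE (by omega)) ⟨n, by omega⟩,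
   fun i : Fin n => M (i.castLE (by omega)) ⟨n + 1, by omega⟩,
   M ⟨n, by omega⟩ ⟨n + 1, by omega⟩)

lemma sum_split (n : ℕ) (f : Fin (n+2) → ℝ) :
    ∑ k, f k = (∑ k : Fin n, f (Fin.castLE (by omega) k)) + f ⟨n, by omega⟩ + f ⟨n+1, by omega⟩ := by
  rw [Fin.sum_univ_castSucc, Fin.sum_univ_castSucc]; rfl

lemma tripleApply (n : ℕ) (N M : Matrix (Fin (n+2)) (Fin (n+2)) ℝ) (i j : Fin (n+2)) :
    (N * Q0mat n * M) i j
      = ∑ k : Fin n, N i (Fin.castLE (by omega) k) * M (Fin.castLE (by omega) k) j := by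
  have h : (N * Q0mat n * M) i j
      = ∑ x : Fin (n+2), N i x * (if (x:ℕ) < n then (1:ℝ) else 0) * M x j := by
    rw [Matrix.mul_apply]
    exact Finset.sum_congr rfl fun x _ => by rw [Q0mat, Matrix.mul_diagonal]
  rw [h, sum_split]
  simp

/-- Inverse of `Psi` on antisymmetric matrices. -/
noncomputable def Phi (n : ℕ) (X : GAmb n) : Matrix (Fin (n+2)) (Fin (n+2)) ℝ :=
  Matrix.of fun a b =>
    if ha : (a:ℕ) < n then
      if hb : (b:ℕ) < n then X.1 ⟨a, ha⟩ ⟨b, hb⟩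
      else if (b:ℕ) = n then X.2.1 ⟨a, ha⟩ else X.2.2.1 ⟨a, ha⟩
    else if (a:ℕ) = n then
      if hb : (b:ℕ) < n then -X.2.1 ⟨b, hb⟩
      else if (b:ℕ) = n then 0 else X.2.2.2
    else
      if hb : (b:ℕ) < n then -X.2.2.1 ⟨b, hb⟩
      else if (b:ℕ) = n then -X.2.2.2 else 0

lemma antisym_apply {n : ℕ} {M : Matrix (Fin (n+2)) (Fin (n+2)) ℝ} (hM : Mᵀ = -M)
    (a b : Fin (n+2)) : M b a = -M a b := by
  have := congrFun (congrFun hM a) b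
  simpa [Matrix.transpose_apply] using this

lemma Phi_Psi {n : ℕ} (M : Matrix (Fin (n+2)) (Fin (n+2)) ℝ) (hM : Mᵀ = -M) :
    Phi n (Psi n M) = M := by
  ext a b
  have ha2 := a.isLt
  have hb2 := b.isLt
  rcases lt_trichotomy (a:ℕ) n with ha | ha | ha <;>
    rcases lt_trichotomy (b:ℕ) n with hb | hb | hb
  all_goals simp only [Phi, Psi, Matrix.of_apply]
  -- case a<n
  · rw [dif_pos ha, dif_pos hb]; rfl
  · rw [dif_pos ha, dif_neg (by omega), if_pos hb]
    congr 1 <;> exact Fin.ext (by simp [hb])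
  · have hb' : (b:ℕ) = n+1 := by omega
    rw [dif_pos ha, dif_neg (by omega), if_neg (by omega)]
    congr 1 <;> exact Fin.ext (by simp [hb'])
  -- case a = n
  · have haa : a = ⟨n, by omega⟩ := Fin.ext ha
    rw [dif_neg (by omega), if_pos ha, dif_pos hb, haa,
      show (Fin.castLE (by omega : n ≤ n + 2) ⟨(b:ℕ), hb⟩) = b from Fin.ext rfl,
      antisym_apply hM (⟨n, by omega⟩ : Fin (n+2)) b, neg_neg]
  · rw [dif_neg (by omega), if_pos ha, dif_neg (by omega), if_pos hb]
    have h1 : a = b := Fin.ext (by omega)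
    subst h1
    have := antisym_apply hM a a
    linarith
  · have hb' : (b:ℕ) = n+1 := by omega
    rw [dif_neg (by omega), if_pos ha, dif_neg (by omega), if_neg (by omega)]
    congr 1 <;> exact Fin.ext (by simp [ha, hb'])
  -- case a = n+1
  · have ha' : (a:ℕ) = n+1 := by omega
    have haa : a = ⟨n+1, by omega⟩ := Fin.ext ha'
    rw [dif_neg (by omega), if_neg (by omega), dif_pos hb, haa,
      show (Fin.castLE (by omega : n ≤ n + 2) ⟨(b:ℕ), hb⟩) = b from Fin.ext rfl,
      antisym_apply hM (⟨n+1, by omega⟩ : Fin (n+2)) b, neg_neg]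
  · have ha' : (a:ℕ) = n+1 := by omega
    have haa : a = ⟨n+1, by omega⟩ := Fin.ext ha'
    have hbb : b = ⟨n, by omega⟩ := Fin.ext hb
    rw [dif_neg (by omega), if_neg (by omega), dif_neg (by omega), if_pos hb, haa, hbb,
      antisym_apply hM (⟨n+1, by omega⟩ : Fin (n+2)) (⟨n, by omega⟩ : Fin (n+2)), neg_neg]
  · have ha' : (a:ℕ) = n+1 := by omega
    have hb' : (b:ℕ) = n+1 := by omega
    have h1 : a = b := Fin.ext (by omega)
    subst h1
    rw [dif_neg (by omega), if_neg (by omega), dif_neg (by omega), if_neg (by omega)]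
    have := antisym_apply hM a a
    linarith

lemma Psi_Phi {n : ℕ} (X : GAmb n) (hX : X.1ᵀ = -X.1) : Psi n (Phi n X) = X := by
  obtain ⟨A, v, w, s⟩ := X
  refine Prod.ext ?_ (Prod.ext ?_ (Prod.ext ?_ ?_))
  · ext i j
    simp only [Psi, Phi, Matrix.of_apply]
    rw [dif_pos (by simp [i.isLt]), dif_pos (by simp [j.isLt])]
    rfl
  · funext i
    simp only [Psi, Phi, Matrix.of_apply]
    rw [dif_pos (by simp [i.isLt]), dif_neg (by simp), if_pos (by simp)]
    rfl
  · funext i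
    simp only [Psi, Phi, Matrix.of_apply]
    rw [dif_pos (by simp [i.isLt]), dif_neg (by simp), if_neg (by simp)]
    rfl
  · simp only [Psi, Phi, Matrix.of_apply]
    norm_num

lemma Phi_antisym {n : ℕ} (X : GAmb n) (hX : X.1ᵀ = -X.1) : (Phi n X)ᵀ = -(Phi n X) := by
  have hA : ∀ i j, X.1 j i = -X.1 i j := fun i j => by
    have := congrFun (congrFun hX i) j
    simpa [Matrix.transpose_apply] using this
  ext a b
  simp only [Matrix.transpose_apply, Matrix.neg_apply, Phi, Matrix.of_apply]
  split_ifs <;> first | omega | (apply hA) | ring | simp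

/-- The `Q₀`-induced bracket on `Λ²ℝ^{n+2}` satisfies the
Jacobi identity, and the resulting Lie algebra is isomorphic to
`g_n = o(n) ⋉ h_n` (the case `ε₁ = ε₂ = ε₃ = 0` of `gBr`), via
`v_i∧v_j ↦ l_{ij}`, `v_i∧v_{n+1} ↦ e_i`, `v_i∧v_{n+2} ↦ e_{n+i}`,
`v_{n+1}∧v_{n+2} ↦ I`. -/
theorem wedge_bracket_iso_gn (n : ℕ) (hn : 3 ≤ n) :
    (∀ M N P : Matrix (Fin (n + 2)) (Fin (n + 2)) ℝ,
        Mᵀ = -M → Nᵀ = -N → Pᵀ = -P →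
        wedgeBr n (wedgeBr n M N) P + wedgeBr n (wedgeBr n N P) M
          + wedgeBr n (wedgeBr n P M) N = 0) ∧
    Set.BijOn (Psi n) {M : Matrix (Fin (n + 2)) (Fin (n + 2)) ℝ | Mᵀ = -M}
      {X : GAmb n | X.1ᵀ = -X.1} ∧
    (∀ M N : Matrix (Fin (n + 2)) (Fin (n + 2)) ℝ, Mᵀ = -M → Nᵀ = -N →
      Psi n (wedgeBr n M N) = gBr n 0 0 0 (Psi n M) (Psi n N)) := by
  refine ⟨?_, ⟨?_, ?_, ?_⟩, ?_⟩
  · intro M N P _ _ _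
    simp only [wedgeBr]
    noncomm_ring
  · -- MapsTo
    intro M hM
    simp only [Set.mem_setOf_eq] at hM ⊢
    ext i j
    simp only [Psi, Matrix.transpose_apply, Matrix.neg_apply, Matrix.of_apply]
    exact antisym_apply hM _ _
  · -- InjOn
    intro M hM N hN h
    rw [← Phi_Psi M hM, ← Phi_Psi N hN, h]
  · -- SurjOn
    intro X hX
    exact ⟨Phi n X, Phi_antisym X hX, Psi_Phi X hX⟩
  · -- bracket compatibility
    intro M N hM hN
    refine Prod.ext ?_ (Prod.ext ?_ (Prod.ext ?_ ?_))
    · ext i j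
      simp only [Psi, wedgeBr, Matrix.of_apply, Matrix.sub_apply, tripleApply]
      simp only [gBr, zero_smul, add_zero, Matrix.add_apply, Matrix.sub_apply,
        Matrix.mul_apply, Matrix.of_apply]
    · funext i
      simp only [Psi, gBr, Matrix.of_apply, wedgeBr, Matrix.sub_apply, tripleApply,
        zero_smul, add_zero, Pi.add_apply, Pi.neg_apply, Matrix.mulVec, dotProduct,
        Fintype.sum_congr]
      ring_nf
    · funext i
      simp only [Psi, gBr, Matrix.of_apply, wedgeBr, Matrix.sub_apply, tripleApply,
        zero_smul, add_zero, sub_zero, Pi.add_apply, Pi.neg_apply, Matrix.mulVec, dotProduct]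
      ring_nf
    · simp only [Psi, gBr, wedgeBr, Matrix.sub_apply, tripleApply]
      rw [← Finset.sum_sub_distrib, ← Finset.sum_sub_distrib]
      refine Finset.sum_congr rfl fun k _ => ?_
      rw [antisym_apply hN ⟨n, by omega⟩ (Fin.castLE (by omega) k),
        antisym_apply hM ⟨n, by omega⟩ (Fin.castLE (by omega) k)]
      ring
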